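/- In the deterministic setup below, for every index 1 ≤ i ≤ M−2, at least one of the three successive squares Q_i, Q_{i+1}, Q_{i+2} ∈ 𝒬_I is not a corner. -/

import Mathlib

open MeasureTheory Set Filter ProbabilityTheory
open scoped ENNReal NNReal Topology RealInnerProductSpace

noncomputable section

/-- The plane `ℝ²` with the Euclidean metric. -/
abbrev Plane : Type := EuclideanSpace ℝ (Fin 2)

/-- The point `(x, y)` of the plane. -/
def pt (x y : ℝ) : Plane := (WithLp.equiv 2 (Fin 2 → ℝ)).symm ![x, y]

/-- The closed axis-parallel square with lower-left corner `(x0, y0)` and side `s`. -/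
def sq2 (x0 y0 s : ℝ) : Set Plane :=
  {z | z 0 ∈ Icc x0 (x0 + s) ∧ z 1 ∈ Icc y0 (y0 + s)}

/-- The closed unit square `Q₀ = [0,1]²`. -/
def Q0set : Set Plane := sq2 0 0 1

/-- The closed dyadic square of level `n` with indices `(i, j)`. -/
def dsq (n i j : ℕ) : Set Plane := sq2 ((i : ℝ) / 2 ^ n) ((j : ℝ) / 2 ^ n) (1 / 2 ^ n)

/-- Sample space of fractal percolation: a coin `ω (n, i, j)` for each (index of a)
dyadic square. -/
abbrev Omega : Type := ℕ × ℕ × ℕ → Bool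

/-- The square of level `n` with indices `(i, j)` is retained in the construction, i.e. it is a
genuine dyadic subsquare of `Q₀` and every dyadic square `Q'` of some level `m ≥ 1`
containing it has `ω Q' = 1`. -/
def retainedIdx (ω : Omega) (n i j : ℕ) : Prop :=
  1 ≤ n ∧ i < 2 ^ n ∧ j < 2 ^ n ∧
    ∀ m i' j', 1 ≤ m → i' < 2 ^ m → j' < 2 ^ m → dsq n i j ⊆ dsq m i' j' →
      ω (m, i', j') = true

/-- The fractal percolation limit set `E(ω)`. -/
def Elim (ω : Omega) : Set Plane :=
  ⋂ n ∈ {n : ℕ | 1 ≤ n}, ⋃ i, ⋃ j, ⋃ (_ : retainedIdx ω n i j), dsq n i j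

/-- The marginal condition: each coordinate equals `1` with probability `p`. -/
def Marginals (P : Measure Omega) (p : ℝ) : Prop :=
  ∀ q : ℕ × ℕ × ℕ, P {ω | ω q = true} = ENNReal.ofReal p

/-- The independence condition: the coordinates are independent under `P`. -/
def CoordIndep (P : Measure Omega) : Prop :=
  iIndepFun (m := fun _ : ℕ × ℕ × ℕ => (inferInstance : MeasurableSpace Bool))
    (fun (q : ℕ × ℕ × ℕ) (ω : Omega) => ω q) P

/-- The unit vector making angle `θ` with the positive `x`-axis. -/
def uvec (θ : ℝ) : Plane := pt (Real.cos θ) (Real.sin θ)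

/-- The affine line `ℓ(θ, a)` through `(a cos θ, a sin θ)` perpendicular to
`(cos θ, sin θ)`. -/
def lineL (θ a : ℝ) : Set Plane := {z | ⟪z, uvec θ⟫ = a}

/-- Orthogonal projection onto the line `ℓ(θ, a)`. -/
def projLine (θ a : ℝ) (z : Plane) : Plane := z + (a - ⟪z, uvec θ⟫) • uvec θ

/-- The visible part of `F` from the line `ℓ(θ, a)`. -/
def Vline (θ a : ℝ) (F : Set Plane) : Set Plane :=
  {x | x ∈ F ∧ segment ℝ x (projLine θ a x) ∩ F = {x}}

/-- The visible part of `F` from the point `x`. -/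
def Vpt (x : Plane) (F : Set Plane) : Set Plane :=
  {y | y ∈ F ∧ segment ℝ y x ∩ F = {y}}

/-- The closed dyadic square of the plane of level `k` with indices `(i, j) ∈ ℤ²`. -/
def dsqZ (k : ℕ) (i j : ℤ) : Set Plane :=
  {z | z 0 ∈ Icc ((i : ℝ) / 2 ^ k) ((i + 1) / 2 ^ k) ∧
       z 1 ∈ Icc ((j : ℝ) / 2 ^ k) ((j + 1) / 2 ^ k)}

/-- `N_k(A)`: the number of dyadic squares of side length `2^{-k}` intersecting `A`. -/
def Ncount (k : ℕ) (A : Set Plane) : ℕ :=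
  Set.ncard {q : ℤ × ℤ | (dsqZ k q.1 q.2 ∩ A).Nonempty}


/-- `Q(ε)`-type set: the closed square with lower-left corner `(x0, y0)` and side `s`, with
half-open squares of side `r` removed from the upper-left and lower-right corners. -/
def cut2 (x0 y0 s r : ℝ) : Set Plane :=
  sq2 x0 y0 s \
    ({z | z 0 ∈ Ico x0 (x0 + r) ∧ z 1 ∈ Ioc (y0 + s - r) (y0 + s)} ∪
     {z | z 0 ∈ Ioc (x0 + s - r) (x0 + s) ∧ z 1 ∈ Ico y0 (y0 + r)})

/-- The closed square with lower-left corner `(x0, y0)` and side `s`, with half-open squares of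
side `r` removed from all four corners. -/
def cut4 (x0 y0 s r : ℝ) : Set Plane :=
  sq2 x0 y0 s \
    ({z | z 0 ∈ Ico x0 (x0 + r) ∧ z 1 ∈ Ico y0 (y0 + r)} ∪
     {z | z 0 ∈ Ico x0 (x0 + r) ∧ z 1 ∈ Ioc (y0 + s - r) (y0 + s)} ∪
     {z | z 0 ∈ Ioc (x0 + s - r) (x0 + s) ∧ z 1 ∈ Ico y0 (y0 + r)} ∪
     {z | z 0 ∈ Ioc (x0 + s - r) (x0 + s) ∧ z 1 ∈ Ioc (y0 + s - r) (y0 + s)})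

/-- The line `{(x, y) : y = -t·x - a}`. -/
def lineT (t a : ℝ) : Set Plane := {z | z 1 = -t * z 0 - a}

/-- Unit direction vector of the line `y = -t·x - a`. -/
def vdir (t : ℝ) : Plane := (Real.sqrt (1 + t ^ 2))⁻¹ • pt 1 (-t)

/-- Orthogonal projection onto the line `y = -t·x - a`. -/
def projT (t a : ℝ) (z : Plane) : Plane :=
  pt 0 (-a) + ⟪z - pt 0 (-a), vdir t⟫ • vdir t

/-- The visible part of `F` from the line `y = -t·x - a`. -/
def VlineT (t a : ℝ) (F : Set Plane) : Set Plane :=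
  {x | x ∈ F ∧ segment ℝ x (projT t a x) ∩ F = {x}}

/-- The centre of the dyadic square of level `n` with indices `(i, j)`. -/
def ctr (n i j : ℕ) : Plane := pt (((i : ℝ) + 1 / 2) / 2 ^ n) (((j : ℝ) + 1 / 2) / 2 ^ n)

/-- The distance from `z` to the line `y = -t·x - a`. -/
def dline (t a : ℝ) (z : Plane) : ℝ := Metric.infDist z (lineT t a)

/-- The subinterval (arc) of the line `y = -t·x - a` whose arclength coordinate (w.r.t. the
unit direction `vdir t`) ranges over `[b, b + len]`. -/
def Iarc (t a b len : ℝ) : Set Plane :=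
  {w | w ∈ lineT t a ∧ ⟪w, vdir t⟫ ∈ Icc b (b + len)}

/-- `𝒬_I`: indices `(i, j)` of the dyadic squares of level `n` whose centre projects
into the interval `I = Iarc t a b len` of the line `y = -t·x - a`. -/
def QI (t a : ℝ) (n : ℕ) (b len : ℝ) : Set (ℕ × ℕ) :=
  {q | q.1 < 2 ^ n ∧ q.2 < 2 ^ n ∧ projT t a (ctr n q.1 q.2) ∈ Iarc t a b len}

/-- A dyadic square of level `n ≥ 3` with indices `(i, j)` is a corner if it is the
upper-left-most or lower-right-most level-`n` subsquare of the level-`(n-2)` square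
containing it. -/
def CornerSq (i j : ℕ) : Prop := (i % 4 = 0 ∧ j % 4 = 3) ∨ (i % 4 = 3 ∧ j % 4 = 0)

/-- `C₁ = q`: among the squares of `𝒬_I`, `q` is retained and no square of `𝒬_I` whose centre
is strictly closer to the line is retained. -/
def isFirst (t a : ℝ) (n : ℕ) (b len : ℝ) (ω : Omega) (q : ℕ × ℕ) : Prop :=
  q ∈ QI t a n b len ∧ retainedIdx ω n q.1 q.2 ∧
    ∀ r ∈ QI t a n b len, dline t a (ctr n r.1 r.2) < dline t a (ctr n q.1 q.2) →
      ¬ retainedIdx ω n r.1 r.2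

/-- `Z_m(ω) = 1`: there is a retained corner square `q` of `𝒬_I` such that exactly `m - 1`
retained squares of `𝒬_I` are strictly closer to the line (i.e. `C_m` exists and is
a corner). -/
def Zev (t a : ℝ) (n : ℕ) (b len : ℝ) (m : ℕ) (ω : Omega) : Prop :=
  ∃ q ∈ QI t a n b len, retainedIdx ω n q.1 q.2 ∧ CornerSq q.1 q.2 ∧
    Set.ncard {r ∈ QI t a n b len | retainedIdx ω n r.1 r.2 ∧
      dline t a (ctr n r.1 r.2) < dline t a (ctr n q.1 q.2)} = m - 1

/-- Radial projection of the set `A` from the point `x` onto the unit circle. -/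
def radProj (x : Plane) (A : Set Plane) : Set Plane :=
  (fun y => ‖y - x‖⁻¹ • (y - x)) '' A

/-- The centred unit square `Q₀ᶜ = [-1/2, 1/2]²`. -/
def Q0c : Set Plane := sq2 (-(1/2)) (-(1/2)) 1

/-- The translated limit set `Eᶜ(ω) = E(ω) - (1/2, 1/2)`. -/
def ElimC (ω : Omega) : Set Plane := (fun z => z - pt (1/2) (1/2)) '' Elim ω

/-- `Q̲₀ᶜ(1/4)`: the centred unit square with half-open squares of side `1/4` removed from
its four corners. -/
def cut4c : Set Plane := cut4 (-(1/2)) (-(1/2)) 1 (1/4)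


/-- `Q(ε)` for the dyadic square of level `n` with indices `(i, j)`: the square with the
half-open squares of relative side `ε` removed from its upper-left and lower-right corners. -/
def dcut (n i j : ℕ) (ε : ℝ) : Set Plane :=
  cut2 ((i : ℝ) / 2 ^ n) ((j : ℝ) / 2 ^ n) (1 / 2 ^ n) (ε * (1 / 2 ^ n))
/-! ### Auxiliary lemmas for `stmt6` -/

namespace Stmt6Aux

lemma pt0 (x y : ℝ) : pt x y 0 = x := rfl
lemma pt1 (x y : ℝ) : pt x y 1 = y := rfl

lemma inner2 (z w : Plane) : ⟪z, w⟫ = z 0 * w 0 + z 1 * w 1 := by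
  simp [PiLp.inner_apply, Fin.sum_univ_two, RCLike.inner_apply]
  ring

lemma dist2 (z w : Plane) : dist z w = Real.sqrt ((z 0 - w 0)^2 + (z 1 - w 1)^2) := by
  rw [EuclideanSpace.dist_eq]; simp [Fin.sum_univ_two, Real.dist_eq, sq_abs]

lemma s_pos (t : ℝ) : 0 < Real.sqrt (1 + t^2) := Real.sqrt_pos.2 (by positivity)
lemma s_sq (t : ℝ) : Real.sqrt (1 + t^2) ^ 2 = 1 + t^2 := Real.sq_sqrt (by positivity)

lemma vdir0 (t : ℝ) : vdir t 0 = (Real.sqrt (1+t^2))⁻¹ := by simp [vdir, pt0]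
lemma vdir1 (t : ℝ) : vdir t 1 = -t * (Real.sqrt (1+t^2))⁻¹ := by simp [vdir, pt1]; ring

lemma projT0 (t a : ℝ) (z : Plane) :
    projT t a z 0 = ⟪z - pt 0 (-a), vdir t⟫ * (Real.sqrt (1+t^2))⁻¹ := by
  simp [projT, vdir0, pt0]
lemma projT1 (t a : ℝ) (z : Plane) :
    projT t a z 1 = -a + ⟪z - pt 0 (-a), vdir t⟫ * (-t * (Real.sqrt (1+t^2))⁻¹) := by
  simp [projT, vdir1, pt1]

lemma projT_mem (t a : ℝ) (z : Plane) : projT t a z ∈ lineT t a := by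
  simp only [lineT, Set.mem_setOf_eq, projT0, projT1]; ring

lemma inner_vdir (t : ℝ) (z : Plane) :
    ⟪z, vdir t⟫ = (z 0 - t * z 1) / Real.sqrt (1+t^2) := by
  rw [inner2, vdir0, vdir1]; field_simp; ring

lemma inner_projT_vdir (t a : ℝ) (z : Plane) : ⟪projT t a z, vdir t⟫ = ⟪z, vdir t⟫ := by
  have hs := s_pos t
  have hsq := s_sq t
  rw [inner_vdir, inner_vdir, projT0, projT1, inner_vdir]
  have h0 : (pt 0 (-a) : Plane) 0 = 0 := rfl
  have h1 : (pt 0 (-a) : Plane) 1 = -a := rfl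
  simp only [PiLp.sub_apply, h0, h1]
  field_simp
  linear_combination (t*a - z 0 + t * z 1) * hsq

lemma lineT_nonempty (t a : ℝ) : (lineT t a).Nonempty :=
  ⟨pt 0 (-a), by simp [lineT, pt0, pt1]⟩

lemma dline_eq' (t a : ℝ) (z : Plane) (hz : 0 ≤ t * z 0 + z 1 + a) :
    dline t a z = (t * z 0 + z 1 + a) / Real.sqrt (1 + t^2) := by
  have hs := s_pos t
  have hsq := s_sq t
  set s := Real.sqrt (1 + t^2) with hsdef
  set D := (t * z 0 + z 1 + a) / s with hD
  have hD0 : 0 ≤ D := div_nonneg hz hs.le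
  apply le_antisymm
  · have hw : (pt (z 0 - t*D/s) (z 1 - D/s)) ∈ lineT t a := by
      simp only [lineT, Set.mem_setOf_eq, pt0, pt1]
      have hDs : D * s = t * z 0 + z 1 + a := by rw [hD]; field_simp
      field_simp
      nlinarith [hsq, hDs]
    calc dline t a z ≤ dist z (pt (z 0 - t*D/s) (z 1 - D/s)) :=
          Metric.infDist_le_dist_of_mem hw
      _ = D := by
          rw [dist2, pt0, pt1]
          have : (z 0 - (z 0 - t*D/s))^2 + (z 1 - (z 1 - D/s))^2 = D^2 := by
            field_simp; nlinarith [hsq]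
          rw [this, Real.sqrt_sq hD0]
  · by_contra hlt
    push_neg at hlt
    obtain ⟨w, hw, hdw⟩ := (Metric.infDist_lt_iff (lineT_nonempty t a)).1 hlt
    have hw1 : w 1 = -t * w 0 - a := hw
    rw [dist2] at hdw
    have h1 : D ≤ Real.sqrt ((z 0 - w 0)^2 + (z 1 - w 1)^2) := by
      rw [hD, div_le_iff₀ hs]
      have key : t * z 0 + z 1 + a = t * (z 0 - w 0) + (z 1 - w 1) := by rw [hw1]; ring
      rw [key]
      set u := z 0 - w 0; set v := z 1 - w 1
      have h2 : (t*u + v)^2 ≤ (1+t^2) * (u^2+v^2) := by nlinarith [sq_nonneg (u - t*v)]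
      have h5 : t*u+v ≤ s * Real.sqrt (u^2+v^2) := by
        calc t*u+v ≤ |t*u+v| := le_abs_self _
          _ = Real.sqrt ((t*u+v)^2) := (Real.sqrt_sq_eq_abs _).symm
          _ ≤ Real.sqrt (s^2 * (u^2+v^2)) := Real.sqrt_le_sqrt (by nlinarith)
          _ = s * Real.sqrt (u^2+v^2) := by
              rw [Real.sqrt_mul (by positivity), Real.sqrt_sq hs.le]
      linarith
    linarith

/-- The linear functional `t·i + j` ordering the squares by distance to the line. -/
def Wfun (t : ℝ) (q : ℕ × ℕ) : ℝ := t * q.1 + q.2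

/-- Arclength coordinate of the projection of the centre of square `q`. -/
def Ufun (t : ℝ) (n : ℕ) (q : ℕ × ℕ) : ℝ :=
  ((((q.1:ℝ)+1/2)/2^n) - t * (((q.2:ℝ)+1/2)/2^n)) / Real.sqrt (1+t^2)

/-- Distance from the centre of square `q` to the line. -/
def Dfun (t a : ℝ) (n : ℕ) (q : ℕ × ℕ) : ℝ :=
  (t*(((q.1:ℝ)+1/2)/2^n) + (((q.2:ℝ)+1/2)/2^n) + a) / Real.sqrt (1+t^2)

lemma ctr0 (n i j : ℕ) : ctr n i j 0 = ((i:ℝ)+1/2)/2^n := rfl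
lemma ctr1 (n i j : ℕ) : ctr n i j 1 = ((j:ℝ)+1/2)/2^n := rfl

lemma inner_ctr_vdir (t : ℝ) (n : ℕ) (q : ℕ × ℕ) :
    ⟪ctr n q.1 q.2, vdir t⟫ = Ufun t n q := by
  rw [inner_vdir, ctr0, ctr1, Ufun]

lemma mem_QI_iff (t a : ℝ) (n : ℕ) (b len : ℝ) (q : ℕ × ℕ) :
    q ∈ QI t a n b len ↔
      q.1 < 2^n ∧ q.2 < 2^n ∧ Ufun t n q ∈ Set.Icc b (b + len) := by
  simp only [QI, Iarc, Set.mem_setOf_eq, projT_mem, true_and,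
    inner_projT_vdir, inner_ctr_vdir]

lemma dline_ctr (t a : ℝ) (ht : 0 < t) (ha : 0 < a) (n : ℕ) (q : ℕ × ℕ) :
    dline t a (ctr n q.1 q.2) = Dfun t a n q := by
  rw [dline_eq' t a _ (by rw [ctr0, ctr1]; positivity), ctr0, ctr1, Dfun]

lemma Dfun_lt_iff (t a : ℝ) (n : ℕ) (q q' : ℕ × ℕ) :
    Dfun t a n q < Dfun t a n q' ↔ Wfun t q < Wfun t q' := by
  have hs := s_pos t
  have h2 : (0:ℝ) < (2:ℝ)^n := by positivity
  have key : ∀ r : ℕ × ℕ, t*(((r.1:ℝ)+1/2)/2^n) + (((r.2:ℝ)+1/2)/2^n) + a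
      = (Wfun t r + (t+1)/2) * (1/2^n) + a := by
    intro r; unfold Wfun; field_simp; ring
  unfold Dfun
  rw [key, key, div_lt_div_iff_of_pos_right, add_lt_add_iff_right,
    mul_lt_mul_iff_left₀ (by positivity), add_lt_add_iff_right]
  exact hs

lemma e_mono_W (t a : ℝ) (ht : 0 < t) (ha : 0 < a) (n : ℕ) {M : ℕ}
    (e : Fin M → ℕ × ℕ)
    (hmono : ∀ k l : Fin M, k < l →
      dline t a (ctr n (e k).1 (e k).2) < dline t a (ctr n (e l).1 (e l).2))
    (k l : Fin M) (hkl : k < l) : Wfun t (e k) < Wfun t (e l) := by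
  have := hmono k l hkl
  rw [dline_ctr t a ht ha, dline_ctr t a ht ha, Dfun_lt_iff] at this
  exact this

lemma exclusion (t a : ℝ) (ht : 0 < t) (ha : 0 < a) (n : ℕ) (b len : ℝ)
    {M : ℕ} (e : Fin M → ℕ × ℕ)
    (hsurj : ∀ q ∈ QI t a n b len, ∃ k, e k = q)
    (hmono : ∀ k l : Fin M, k < l →
      dline t a (ctr n (e k).1 (e k).2) < dline t a (ctr n (e l).1 (e l).2))
    (k : ℕ) (hk : k + 1 < M) (r : ℕ × ℕ) (hr : r ∈ QI t a n b len)
    (h1 : Wfun t (e ⟨k, by omega⟩) < Wfun t r)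
    (h2 : Wfun t r < Wfun t (e ⟨k+1, hk⟩)) : False := by
  obtain ⟨l, hl⟩ := hsurj r hr
  have conv := e_mono_W t a ht ha n e hmono
  rcases lt_trichotomy l.val k with hlk | hlk | hlk
  · have := conv l ⟨k, by omega⟩ (by simpa [Fin.lt_def] using hlk)
    rw [hl] at this; linarith
  · have hl2 : l = (⟨k, by omega⟩ : Fin M) := Fin.ext hlk
    rw [hl2] at hl; rw [hl] at h1; linarith
  · rcases eq_or_lt_of_le (by omega : k + 1 ≤ l.val) with hlk1 | hlk1
    · have hl2 : l = (⟨k+1, hk⟩ : Fin M) := Fin.ext hlk1.symm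
      rw [hl2] at hl; rw [hl] at h2; linarith
    · have := conv ⟨k+1, hk⟩ l (by simpa [Fin.lt_def] using hlk1)
      rw [hl] at this; linarith

lemma mid_mem (t a : ℝ) (n : ℕ) (b len : ℝ) (q q' r : ℕ × ℕ) (m : ℕ)
    (hm : m ≤ 4) (hb1 : r.1 < 2^n) (hb2 : r.2 < 2^n)
    (hq : q ∈ QI t a n b len) (hq' : q' ∈ QI t a n b len)
    (h1 : 4 * r.1 = (4 - m) * q.1 + m * q'.1)
    (h2 : 4 * r.2 = (4 - m) * q.2 + m * q'.2) :
    r ∈ QI t a n b len ∧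
      4 * Wfun t r = (4 - (m:ℝ)) * Wfun t q + m * Wfun t q' := by
  rw [mem_QI_iff] at hq hq' ⊢
  obtain ⟨hq1, hq2, hqU⟩ := hq
  obtain ⟨hq1', hq2', hqU'⟩ := hq'
  have hmr : ((4:ℝ) - (m:ℕ)) = ((4 - m : ℕ) : ℝ) := by
    rw [Nat.cast_sub hm]; norm_num
  have hc1 : 4 * (r.1:ℝ) = (4 - (m:ℝ)) * q.1 + m * q'.1 := by
    have := congrArg (Nat.cast : ℕ → ℝ) h1
    push_cast [Nat.cast_sub hm] at this
    linarith
  have hc2 : 4 * (r.2:ℝ) = (4 - (m:ℝ)) * q.2 + m * q'.2 := by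
    have := congrArg (Nat.cast : ℕ → ℝ) h2
    push_cast [Nat.cast_sub hm] at this
    linarith
  have hm4 : (m:ℝ) ≤ 4 := by exact_mod_cast hm
  have hm0 : (0:ℝ) ≤ m := Nat.cast_nonneg m
  have hU : 4 * Ufun t n r = (4 - (m:ℝ)) * Ufun t n q + m * Ufun t n q' := by
    unfold Ufun
    have hs := (s_pos t).ne'
    have h2n : ((2:ℝ)^n) ≠ 0 := by positivity
    field_simp
    linear_combination 2*hc1 - 2*t*hc2
  have hW : 4 * Wfun t r = (4 - (m:ℝ)) * Wfun t q + m * Wfun t q' := by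
    unfold Wfun
    linear_combination t * hc1 + hc2
  refine ⟨⟨hb1, hb2, ?_, ?_⟩, hW⟩
  · have A := mul_nonneg (by linarith : (0:ℝ) ≤ 4 - m) (sub_nonneg.2 hqU.1)
    have B := mul_nonneg hm0 (sub_nonneg.2 hqU'.1)
    linarith
  · have A := mul_nonneg (by linarith : (0:ℝ) ≤ 4 - m) (sub_nonneg.2 hqU.2)
    have B := mul_nonneg hm0 (sub_nonneg.2 hqU'.2)
    linarith

lemma between_pair (t a : ℝ) (n : ℕ) (b len : ℝ) (q q' : ℕ × ℕ)
    (hq : q ∈ QI t a n b len) (hq' : q' ∈ QI t a n b len)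
    (m1 : q.1 % 4 = q'.1 % 4) (m2 : q.2 % 4 = q'.2 % 4)
    (hW : Wfun t q < Wfun t q') :
    ∃ r ∈ QI t a n b len, Wfun t q < Wfun t r ∧ Wfun t r < Wfun t q' := by
  obtain ⟨hbq1, hbq2, -⟩ := (mem_QI_iff t a n b len q).1 hq
  obtain ⟨hbq1', hbq2', -⟩ := (mem_QI_iff t a n b len q').1 hq'
  have e1 : 4 * ((3*q.1 + q'.1)/4) = (4-1) * q.1 + 1 * q'.1 := by omega
  have e2 : 4 * ((3*q.2 + q'.2)/4) = (4-1) * q.2 + 1 * q'.2 := by omega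
  obtain ⟨hrQI, hrW⟩ := mid_mem t a n b len q q' ((3*q.1 + q'.1)/4, (3*q.2 + q'.2)/4) 1
    (by omega) (by omega) (by omega) hq hq' e1 e2
  push_cast at hrW
  exact ⟨_, hrQI, by linarith, by linarith⟩

lemma between_triple (t a : ℝ) (n : ℕ) (b len : ℝ) (q q' : ℕ × ℕ)
    (hq : q ∈ QI t a n b len) (hq' : q' ∈ QI t a n b len)
    (m1 : q.1 % 4 = q'.1 % 4) (m2 : q.2 % 4 = q'.2 % 4)
    (hW : Wfun t q < Wfun t q') :
    ∃ r1 ∈ QI t a n b len, ∃ r2 ∈ QI t a n b len,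
      Wfun t q < Wfun t r1 ∧ Wfun t r1 < Wfun t r2 ∧ Wfun t r2 < Wfun t q' := by
  obtain ⟨hbq1, hbq2, -⟩ := (mem_QI_iff t a n b len q).1 hq
  obtain ⟨hbq1', hbq2', -⟩ := (mem_QI_iff t a n b len q').1 hq'
  have e1 : 4 * ((3*q.1 + q'.1)/4) = (4-1) * q.1 + 1 * q'.1 := by omega
  have e2 : 4 * ((3*q.2 + q'.2)/4) = (4-1) * q.2 + 1 * q'.2 := by omega
  have f1 : 4 * ((2*q.1 + 2*q'.1)/4) = (4-2) * q.1 + 2 * q'.1 := by omega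
  have f2 : 4 * ((2*q.2 + 2*q'.2)/4) = (4-2) * q.2 + 2 * q'.2 := by omega
  obtain ⟨hr1QI, hr1W⟩ := mid_mem t a n b len q q' ((3*q.1 + q'.1)/4, (3*q.2 + q'.2)/4) 1
    (by omega) (by omega) (by omega) hq hq' e1 e2
  obtain ⟨hr2QI, hr2W⟩ := mid_mem t a n b len q q' ((2*q.1 + 2*q'.1)/4, (2*q.2 + 2*q'.2)/4) 2
    (by omega) (by omega) (by omega) hq hq' f1 f2
  push_cast at hr1W hr2W
  exact ⟨_, hr1QI, _, hr2QI, by linarith, by linarith, by linarith⟩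

end Stmt6Aux

/-- Claim 1: among any three successive squares of `𝒬_I` (enumerated by
increasing distance of their centres to the line `y = -t·x - a`), at least one is not
a corner. -/
theorem stmt6 (t a : ℝ) (ht : 0 < t) (ha : 0 < a)
    (ε : ℝ) (hε : ε ∈ Set.Ioo (0 : ℝ) (1/3)) (n : ℕ) (hn : 3 ≤ n)
    (b : ℝ) (hI : Iarc t a b (ε / 2 ^ n) ⊆ projT t a '' Q0set)
    (M : ℕ) (e : Fin M → ℕ × ℕ)
    (hmem : ∀ k, e k ∈ QI t a n b (ε / 2 ^ n))
    (hsurj : ∀ q ∈ QI t a n b (ε / 2 ^ n), ∃ k, e k = q)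
    (hmono : ∀ k l : Fin M, k < l →
      dline t a (ctr n (e k).1 (e k).2) < dline t a (ctr n (e l).1 (e l).2)) :
    ∀ (i : ℕ) (h : i + 2 < M),
      ¬(CornerSq (e ⟨i, by omega⟩).1 (e ⟨i, by omega⟩).2 ∧
        CornerSq (e ⟨i+1, by omega⟩).1 (e ⟨i+1, by omega⟩).2 ∧
        CornerSq (e ⟨i+2, h⟩).1 (e ⟨i+2, h⟩).2) := by
  intro i h
  rintro ⟨hc1, hc2, hc3⟩
  have key : ∀ (k : ℕ) (hk : k + 1 < M),
      (e ⟨k, Nat.lt_of_succ_lt hk⟩).1 % 4 = (e ⟨k+1, hk⟩).1 % 4 →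
      (e ⟨k, Nat.lt_of_succ_lt hk⟩).2 % 4 = (e ⟨k+1, hk⟩).2 % 4 → False := by
    intro k hk m1 m2
    have hW : Stmt6Aux.Wfun t (e ⟨k, Nat.lt_of_succ_lt hk⟩) < Stmt6Aux.Wfun t (e ⟨k+1, hk⟩) :=
      Stmt6Aux.e_mono_W t a ht ha n e hmono _ _ (Fin.mk_lt_mk.mpr (by omega))
    obtain ⟨r, hrQI, hr1, hr2⟩ := Stmt6Aux.between_pair t a n b (ε/2^n) _ _
      (hmem _) (hmem _) m1 m2 hW
    exact Stmt6Aux.exclusion t a ht ha n b (ε/2^n) e hsurj hmono k hk r hrQI hr1 hr2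
  have hW12 : Stmt6Aux.Wfun t (e ⟨i, by omega⟩) < Stmt6Aux.Wfun t (e ⟨i+1, by omega⟩) :=
    Stmt6Aux.e_mono_W t a ht ha n e hmono _ _ (Fin.mk_lt_mk.mpr (by omega))
  have hW23 : Stmt6Aux.Wfun t (e ⟨i+1, by omega⟩) < Stmt6Aux.Wfun t (e ⟨i+2, h⟩) :=
    Stmt6Aux.e_mono_W t a ht ha n e hmono _ _ (Fin.mk_lt_mk.mpr (by omega))
  have key3 : (e ⟨i, by omega⟩).1 % 4 = (e ⟨i+2, h⟩).1 % 4 →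
      (e ⟨i, by omega⟩).2 % 4 = (e ⟨i+2, h⟩).2 % 4 → False := by
    intro m1 m2
    obtain ⟨r1, hr1QI, r2, hr2QI, ha1, ha2, ha3⟩ :=
      Stmt6Aux.between_triple t a n b (ε/2^n) _ _
        (hmem ⟨i, by omega⟩) (hmem ⟨i+2, h⟩) m1 m2 (by linarith)
    rcases lt_trichotomy (Stmt6Aux.Wfun t r1) (Stmt6Aux.Wfun t (e ⟨i+1, by omega⟩)) with hcmp | hcmp | hcmp
    · exact Stmt6Aux.exclusion t a ht ha n b (ε/2^n) e hsurj hmono i (by omega)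
        r1 hr1QI ha1 hcmp
    · exact Stmt6Aux.exclusion t a ht ha n b (ε/2^n) e hsurj hmono (i+1) h
        r2 hr2QI (by linarith) (by linarith)
    · exact Stmt6Aux.exclusion t a ht ha n b (ε/2^n) e hsurj hmono (i+1) h
        r1 hr1QI hcmp (by linarith)
  rcases hc1 with ⟨a1, b1⟩ | ⟨a1, b1⟩ <;>
    rcases hc2 with ⟨a2, b2⟩ | ⟨a2, b2⟩ <;>
      rcases hc3 with ⟨a3, b3⟩ | ⟨a3, b3⟩
  all_goals first
    | exact key i (by omega) (a1.trans a2.symm) (b1.trans b2.symm)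
    | exact key (i+1) h (a2.trans a3.symm) (b2.trans b3.symm)
    | exact key3 (a1.trans a3.symm) (b1.trans b3.symm)
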